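/- Let J2 be the graph with vertices v1,...,v6 and edges v1v2, v2v3, v3v4, v1v5, v2v5, v3v6, v4v6. If L is a list assignment with |L(v1)| = 3, |L(v2)| = 4, |L(v3)| = 4, |L(v4)| = 3, |L(v5)| = 2, |L(v6)| = 2, then the square of J2 admits a proper L-coloring. -/
import Mathlib

lemma nm {s : Finset ℕ} {a b : ℕ} (ha : a ∈ s) (hb : b ∉ s) : a ≠ b :=
  fun h => hb (h ▸ ha)

lemma avoid1 (s : Finset ℕ) (h : 2 ≤ s.card) (a : ℕ) : ∃ x ∈ s, x ≠ a := by
  by_contra hc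
  push_neg at hc
  have hsub : s ⊆ {a} := fun x hx => Finset.mem_singleton.2 (hc x hx)
  have := Finset.card_le_card hsub
  simp [Finset.card_singleton] at this
  omega

lemma avoid2 (s : Finset ℕ) (h : 3 ≤ s.card) (a b : ℕ) : ∃ x ∈ s, x ≠ a ∧ x ≠ b := by
  by_contra hc
  push_neg at hc
  have hsub : s ⊆ {a, b} := by
    intro x hx
    rcases Classical.em (x = a) with h1 | h1
    · simp [h1]
    · simp [hc x hx h1]
  have h1 : ({a, b} : Finset ℕ).card ≤ 2 :=
    le_trans (Finset.card_insert_le _ _) (by simp)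
  have h2 := Finset.card_le_card hsub
  omega

lemma avoid3 (s : Finset ℕ) (h : 4 ≤ s.card) (a b c : ℕ) : ∃ x ∈ s, x ≠ a ∧ x ≠ b ∧ x ≠ c := by
  by_contra hc
  push_neg at hc
  have hsub : s ⊆ {a, b, c} := by
    intro x hx
    rcases Classical.em (x = a) with h1 | h1
    · simp [h1]
    · rcases Classical.em (x = b) with h2 | h2
      · simp [h2]
      · simp [hc x hx h1 h2]
  have h1 : ({a, b, c} : Finset ℕ).card ≤ 3 := by
    refine le_trans (Finset.card_insert_le _ _) ?_
    have : ({b, c} : Finset ℕ).card ≤ 2 := le_trans (Finset.card_insert_le _ _) (by simp)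
    omega
  have h2 := Finset.card_le_card hsub
  omega

lemma getmem (s : Finset ℕ) (h : 1 ≤ s.card) : ∃ x, x ∈ s := by
  have h0 : 0 < s.card := h
  rcases Finset.card_pos.1 h0 with ⟨x, hx⟩
  exact ⟨x, hx⟩

def colOK (s0 s1 s2 s3 s4 s5 : Finset ℕ) : Prop :=
  ∃ f0 f1 f2 f3 f4 f5 : ℕ,
    f0 ∈ s0 ∧ f1 ∈ s1 ∧ f2 ∈ s2 ∧ f3 ∈ s3 ∧ f4 ∈ s4 ∧ f5 ∈ s5 ∧
    f0 ≠ f1 ∧ f0 ≠ f2 ∧ f0 ≠ f4 ∧ f1 ≠ f2 ∧ f1 ≠ f3 ∧ f1 ≠ f4 ∧ f1 ≠ f5 ∧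
    f2 ≠ f3 ∧ f2 ≠ f4 ∧ f2 ≠ f5 ∧ f3 ≠ f5

lemma lemA {s0 s1 s2 s3 s4 s5 : Finset ℕ} (h0 : s0.card = 3) (h1 : s1.card = 4)
    (h2 : s2.card = 4) (h3 : s3.card = 3) {c : ℕ} (hc4 : c ∈ s4) (hc5 : c ∈ s5) :
    colOK s0 s1 s2 s3 s4 s5 := by
  by_cases hA : ∃ d ∈ s0, d ∈ s3 ∧ d ≠ c
  · obtain ⟨d, hd0, hd3, hdc⟩ := hA
    obtain ⟨f2, hf2, f2c, f2d⟩ := avoid2 s2 (by omega) c d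
    obtain ⟨f1, hf1, f1c, f1d, f1f2⟩ := avoid3 s1 (by omega) c d f2
    exact ⟨d, f1, f2, d, c, c, hd0, hf1, hf2, hd3, hc4, hc5,
      f1d.symm, f2d.symm, hdc, f1f2, f1d, f1c, f1c, f2d, f2c, f2c, hdc⟩
  · by_cases hA2 : ∃ x ∈ s0, x ≠ c ∧ x ∉ s1
    · obtain ⟨f0, hf0, f0c, f0n1⟩ := hA2
      obtain ⟨f3, hf3, f3c⟩ := avoid1 s3 (by omega) c
      obtain ⟨f2, hf2, g1, g2, g3⟩ := avoid3 s2 (by omega) f0 f3 c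
      obtain ⟨f1, hf1, k1, k2, k3⟩ := avoid3 s1 (by omega) f2 f3 c
      exact ⟨f0, f1, f2, f3, c, c, hf0, hf1, hf2, hf3, hc4, hc5,
        (nm hf1 f0n1).symm, g1.symm, f0c, k1, k2, k3, k3, g2, g3, g3, f3c⟩
    · by_cases hA3 : ∃ x ∈ s3, x ≠ c ∧ x ∉ s1
      · obtain ⟨f3, hf3, f3c, f3n1⟩ := hA3
        obtain ⟨f0, hf0, f0c⟩ := avoid1 s0 (by omega) c
        obtain ⟨f2, hf2, g1, g2, g3⟩ := avoid3 s2 (by omega) f0 f3 c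
        obtain ⟨f1, hf1, k1, k2, k3⟩ := avoid3 s1 (by omega) f0 f2 c
        exact ⟨f0, f1, f2, f3, c, c, hf0, hf1, hf2, hf3, hc4, hc5,
          k1.symm, g1.symm, f0c, k2, nm hf1 f3n1, k3, k3, g2, g3, g3, f3c⟩
      · push_neg at hA hA2 hA3
        have hc1 : c ∉ s1 := by
          intro hcc
          have hsub : insert c ((s0.erase c) ∪ (s3.erase c)) ⊆ s1 := by
            intro x hx
            rcases Finset.mem_insert.1 hx with rfl | hx
            · exact hcc
            rcases Finset.mem_union.1 hx with hx | hx
            · exact hA2 x (Finset.mem_of_mem_erase hx) (Finset.ne_of_mem_erase hx)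
            · exact hA3 x (Finset.mem_of_mem_erase hx) (Finset.ne_of_mem_erase hx)
          have hdisj : Disjoint (s0.erase c) (s3.erase c) := by
            rw [Finset.disjoint_left]
            intro a ha hb
            exact (Finset.ne_of_mem_erase ha)
              (hA a (Finset.mem_of_mem_erase ha) (Finset.mem_of_mem_erase hb))
          have hcu : c ∉ (s0.erase c) ∪ (s3.erase c) := by
            simp [Finset.mem_union, Finset.mem_erase]
          have hcard : (insert c ((s0.erase c) ∪ (s3.erase c))).card
              = 1 + ((s0.erase c).card + (s3.erase c).card) := by
            rw [Finset.card_insert_of_notMem hcu, Finset.card_union_of_disjoint hdisj]; omega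
          have hle := Finset.card_le_card hsub
          have e0 := Finset.pred_card_le_card_erase (s := s0) (a := c)
          have e3 := Finset.pred_card_le_card_erase (s := s3) (a := c)
          omega
        obtain ⟨f0, hf0, f0c⟩ := avoid1 s0 (by omega) c
        obtain ⟨f3, hf3, f3c⟩ := avoid1 s3 (by omega) c
        obtain ⟨f2, hf2, g1, g2, g3⟩ := avoid3 s2 (by omega) f0 f3 c
        obtain ⟨f1, hf1, k1, k2, k3⟩ := avoid3 s1 (by omega) f0 f2 f3
        exact ⟨f0, f1, f2, f3, c, c, hf0, hf1, hf2, hf3, hc4, hc5,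
          k1.symm, g1.symm, f0c, k2, k3, nm hf1 hc1, nm hf1 hc1, g2, g3, g3, f3c⟩

lemma djl {s t : Finset ℕ} (e : s ∩ t = ∅) {a : ℕ} (ha : a ∈ s) : a ∉ t := by
  intro h
  have : a ∈ s ∩ t := Finset.mem_inter.2 ⟨ha, h⟩
  simp [e] at this

lemma djr {s t : Finset ℕ} (e : s ∩ t = ∅) {a : ℕ} (ha : a ∈ t) : a ∉ s := by
  intro h
  have : a ∈ s ∩ t := Finset.mem_inter.2 ⟨h, ha⟩
  simp [e] at this

lemma lemB {s0 s1 s2 s3 s4 s5 : Finset ℕ} (h0 : s0.card = 3) (h1 : s1.card = 4)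
    (h2 : s2.card = 4) (h3 : s3.card = 3) (h4 : s4.card = 2) (h5 : s5.card = 2)
    (e45 : s4 ∩ s5 = ∅) (e34 : s3 ∩ s4 = ∅) : colOK s0 s1 s2 s3 s4 s5 := by
  by_cases hB1 : ∃ d ∈ s0, d ∈ s3
  · -- B1 : common color for v1, v4
    obtain ⟨d, hd0, hd3⟩ := hB1
    have dn4 : d ∉ s4 := djl e34 hd3
    by_cases hX : ∃ x ∈ s4, ∃ y ∈ s5, y ≠ d ∧
        (d ∉ s1 ∨ x ∉ s1 ∨ y ∉ s1 ∨ d ∉ s2 ∨ x ∉ s2 ∨ y ∉ s2)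
    · obtain ⟨f4, hf4, f5, hf5, f5d, hor⟩ := hX
      rcases hor with h | h | h | h | h | h
      · obtain ⟨f2, hf2, g1, g2, g3⟩ := avoid3 s2 (by omega) d f4 f5
        obtain ⟨f1, hf1, k1, k2, k3⟩ := avoid3 s1 (by omega) f2 f4 f5
        exact ⟨d, f1, f2, d, f4, f5, hd0, hf1, hf2, hd3, hf4, hf5,
          (nm hf1 h).symm, g1.symm, (nm hf4 dn4).symm, k1, nm hf1 h, k2, k3, g1, g2, g3, f5d.symm⟩
      · obtain ⟨f2, hf2, g1, g2, g3⟩ := avoid3 s2 (by omega) d f4 f5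
        obtain ⟨f1, hf1, k1, k2, k3⟩ := avoid3 s1 (by omega) d f2 f5
        exact ⟨d, f1, f2, d, f4, f5, hd0, hf1, hf2, hd3, hf4, hf5,
          k1.symm, g1.symm, (nm hf4 dn4).symm, k2, k1, nm hf1 h, k3, g1, g2, g3, f5d.symm⟩
      · obtain ⟨f2, hf2, g1, g2, g3⟩ := avoid3 s2 (by omega) d f4 f5
        obtain ⟨f1, hf1, k1, k2, k3⟩ := avoid3 s1 (by omega) d f2 f4
        exact ⟨d, f1, f2, d, f4, f5, hd0, hf1, hf2, hd3, hf4, hf5,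
          k1.symm, g1.symm, (nm hf4 dn4).symm, k2, k1, k3, nm hf1 h, g1, g2, g3, f5d.symm⟩
      · obtain ⟨f1, hf1, k1, k2, k3⟩ := avoid3 s1 (by omega) d f4 f5
        obtain ⟨f2, hf2, g1, g2, g3⟩ := avoid3 s2 (by omega) f1 f4 f5
        exact ⟨d, f1, f2, d, f4, f5, hd0, hf1, hf2, hd3, hf4, hf5,
          k1.symm, (nm hf2 h).symm, (nm hf4 dn4).symm, g1.symm, k1, k2, k3, nm hf2 h, g2, g3, f5d.symm⟩
      · obtain ⟨f1, hf1, k1, k2, k3⟩ := avoid3 s1 (by omega) d f4 f5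
        obtain ⟨f2, hf2, g1, g2, g3⟩ := avoid3 s2 (by omega) d f1 f5
        exact ⟨d, f1, f2, d, f4, f5, hd0, hf1, hf2, hd3, hf4, hf5,
          k1.symm, g1.symm, (nm hf4 dn4).symm, g2.symm, k1, k2, k3, g1, nm hf2 h, g3, f5d.symm⟩
      · obtain ⟨f1, hf1, k1, k2, k3⟩ := avoid3 s1 (by omega) d f4 f5
        obtain ⟨f2, hf2, g1, g2, g3⟩ := avoid3 s2 (by omega) d f1 f4
        exact ⟨d, f1, f2, d, f4, f5, hd0, hf1, hf2, hd3, hf4, hf5,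
          k1.symm, g1.symm, (nm hf4 dn4).symm, g2.symm, k1, k2, k3, g1, g3, nm hf2 h, f5d.symm⟩
    · push_neg at hX
      obtain ⟨x0, hx0⟩ := getmem s4 (by omega)
      have hd5 : d ∈ s5 := by
        by_contra hd5
        obtain ⟨y0, hy0⟩ := getmem s5 (by omega)
        have hsub : insert d (s4 ∪ s5) ⊆ s1 := by
          intro z hz
          rcases Finset.mem_insert.1 hz with rfl | hz
          · exact (hX x0 hx0 y0 hy0 (nm hy0 hd5)).1
          rcases Finset.mem_union.1 hz with hz | hz
          · exact (hX z hz y0 hy0 (nm hy0 hd5)).2.1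
          · exact (hX x0 hx0 z hz (nm hz hd5)).2.2.1
        have hdu : d ∉ s4 ∪ s5 := by
          simp only [Finset.mem_union]
          push_neg
          exact ⟨dn4, hd5⟩
        have hdisj : Disjoint s4 s5 := Finset.disjoint_left.2 fun a h1 h2 => (djl e45 h1) h2
        have hcard : (insert d (s4 ∪ s5)).card = 1 + (s4.card + s5.card) := by
          rw [Finset.card_insert_of_notMem hdu, Finset.card_union_of_disjoint hdisj]
          omega
        have := Finset.card_le_card hsub
        omega
      obtain ⟨e, he5, hed⟩ := avoid1 s5 (by omega) d
      have en4 : e ∉ s4 := djr e45 he5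
      have hsubK1 : insert d (insert e s4) ⊆ s1 := by
        intro z hz
        rcases Finset.mem_insert.1 hz with rfl | hz
        · exact (hX x0 hx0 e he5 hed).1
        rcases Finset.mem_insert.1 hz with rfl | hz
        · exact (hX x0 hx0 z he5 hed).2.2.1
        · exact (hX z hz e he5 hed).2.1
      have hsubK2 : insert d (insert e s4) ⊆ s2 := by
        intro z hz
        rcases Finset.mem_insert.1 hz with rfl | hz
        · exact (hX x0 hx0 e he5 hed).2.2.2.1
        rcases Finset.mem_insert.1 hz with rfl | hz
        · exact (hX x0 hx0 z he5 hed).2.2.2.2.2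
        · exact (hX z hz e he5 hed).2.2.2.2.1
      have hcardK : (insert d (insert e s4)).card = 4 := by
        rw [Finset.card_insert_of_notMem (by
          simp only [Finset.mem_insert]
          push_neg
          exact ⟨hed.symm, dn4⟩), Finset.card_insert_of_notMem en4]
        omega
      have hs1K : insert d (insert e s4) = s1 :=
        Finset.eq_of_subset_of_card_le hsubK1 (by omega)
      have hs2K : insert d (insert e s4) = s2 :=
        Finset.eq_of_subset_of_card_le hsubK2 (by omega)
      obtain ⟨f3, hf3, f3d, f3e⟩ := avoid2 s3 (by omega) d e
      have f3n4 : f3 ∉ s4 := djl e34 hf3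
      have f3nK : f3 ∉ insert d (insert e s4) := by
        intro h
        rcases Finset.mem_insert.1 h with rfl | h
        · exact f3d rfl
        rcases Finset.mem_insert.1 h with rfl | h
        · exact f3e rfl
        · exact f3n4 h
      have f3n1 : f3 ∉ s1 := hs1K ▸ f3nK
      have f3n2 : f3 ∉ s2 := hs2K ▸ f3nK
      obtain ⟨f2, hf2, g1, g2⟩ := avoid2 s2 (by omega) d x0
      obtain ⟨f1, hf1, k1, k2, k3⟩ := avoid3 s1 (by omega) d x0 f2
      exact ⟨d, f1, f2, f3, x0, d, hd0, hf1, hf2, hf3, hx0, hd5,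
        k1.symm, g1.symm, (nm hx0 dn4).symm, k3, nm hf1 f3n1, k2, k1,
        nm hf2 f3n2, g2, g1, f3d⟩
  · push_neg at hB1
    by_cases hB2 : ∃ d ∈ s0, d ∈ s5
    · -- B2i : common color for v1, v6
      obtain ⟨d, hd0, hd5⟩ := hB2
      have dn4 : d ∉ s4 := djr e45 hd5
      by_cases hX : ∃ x ∈ s3, ∃ y ∈ s4, x ≠ d ∧
          (d ∉ s1 ∨ x ∉ s1 ∨ y ∉ s1 ∨ d ∉ s2 ∨ x ∉ s2 ∨ y ∉ s2)
      · obtain ⟨f3, hf3, f4, hf4, hxd, hor⟩ := hX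
        rcases hor with h | h | h | h | h | h
        · obtain ⟨f2, hf2, g1, g2, g3⟩ := avoid3 s2 (by omega) d f3 f4
          obtain ⟨f1, hf1, k1, k2, k3⟩ := avoid3 s1 (by omega) f2 f3 f4
          exact ⟨d, f1, f2, f3, f4, d, hd0, hf1, hf2, hf3, hf4, hd5,
            (nm hf1 h).symm, g1.symm, (nm hf4 dn4).symm, k1, k2, k3, nm hf1 h, g2, g3, g1, hxd⟩
        · obtain ⟨f2, hf2, g1, g2, g3⟩ := avoid3 s2 (by omega) d f3 f4
          obtain ⟨f1, hf1, k1, k2, k3⟩ := avoid3 s1 (by omega) d f2 f4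
          exact ⟨d, f1, f2, f3, f4, d, hd0, hf1, hf2, hf3, hf4, hd5,
            k1.symm, g1.symm, (nm hf4 dn4).symm, k2, nm hf1 h, k3, k1, g2, g3, g1, hxd⟩
        · obtain ⟨f2, hf2, g1, g2, g3⟩ := avoid3 s2 (by omega) d f3 f4
          obtain ⟨f1, hf1, k1, k2, k3⟩ := avoid3 s1 (by omega) d f2 f3
          exact ⟨d, f1, f2, f3, f4, d, hd0, hf1, hf2, hf3, hf4, hd5,
            k1.symm, g1.symm, (nm hf4 dn4).symm, k2, k3, nm hf1 h, k1, g2, g3, g1, hxd⟩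
        · obtain ⟨f1, hf1, k1, k2, k3⟩ := avoid3 s1 (by omega) d f3 f4
          obtain ⟨f2, hf2, g1, g2, g3⟩ := avoid3 s2 (by omega) f1 f3 f4
          exact ⟨d, f1, f2, f3, f4, d, hd0, hf1, hf2, hf3, hf4, hd5,
            k1.symm, (nm hf2 h).symm, (nm hf4 dn4).symm, g1.symm, k2, k3, k1, g2, g3, nm hf2 h, hxd⟩
        · obtain ⟨f1, hf1, k1, k2, k3⟩ := avoid3 s1 (by omega) d f3 f4
          obtain ⟨f2, hf2, g1, g2, g3⟩ := avoid3 s2 (by omega) d f1 f4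
          exact ⟨d, f1, f2, f3, f4, d, hd0, hf1, hf2, hf3, hf4, hd5,
            k1.symm, g1.symm, (nm hf4 dn4).symm, g2.symm, k2, k3, k1, nm hf2 h, g3, g1, hxd⟩
        · obtain ⟨f1, hf1, k1, k2, k3⟩ := avoid3 s1 (by omega) d f3 f4
          obtain ⟨f2, hf2, g1, g2, g3⟩ := avoid3 s2 (by omega) d f1 f3
          exact ⟨d, f1, f2, f3, f4, d, hd0, hf1, hf2, hf3, hf4, hd5,
            k1.symm, g1.symm, (nm hf4 dn4).symm, g2.symm, k2, k3, k1, g3, nm hf2 h, g1, hxd⟩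
      · exfalso
        push_neg at hX
        obtain ⟨y1, hy1⟩ := getmem s4 (by omega)
        have he : 2 ≤ (s3.erase d).card := by
          have := Finset.pred_card_le_card_erase (s := s3) (a := d)
          omega
        obtain ⟨x1, hx1⟩ := getmem (s3.erase d) (by omega)
        have hx1' := Finset.mem_of_mem_erase hx1
        have hx1d := Finset.ne_of_mem_erase hx1
        have hsub : insert d ((s3.erase d) ∪ s4) ⊆ s1 := by
          intro z hz
          rcases Finset.mem_insert.1 hz with rfl | hz
          · exact (hX x1 hx1' y1 hy1 hx1d).1
          rcases Finset.mem_union.1 hz with hz | hz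
          · exact (hX z (Finset.mem_of_mem_erase hz) y1 hy1 (Finset.ne_of_mem_erase hz)).2.1
          · exact (hX x1 hx1' z hz hx1d).2.2.1
        have hdisj : Disjoint (s3.erase d) s4 :=
          Finset.disjoint_left.2 fun a ha hb => (djl e34 (Finset.mem_of_mem_erase ha)) hb
        have hdu : d ∉ (s3.erase d) ∪ s4 := by
          simp only [Finset.mem_union]
          push_neg
          exact ⟨fun h => (Finset.ne_of_mem_erase h) rfl, dn4⟩
        have hcard : (insert d ((s3.erase d) ∪ s4)).card
            = 1 + ((s3.erase d).card + s4.card) := by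
          rw [Finset.card_insert_of_notMem hdu, Finset.card_union_of_disjoint hdisj]
          omega
        have := Finset.card_le_card hsub
        omega
    · -- B2ii
      push_neg at hB2
      by_cases ha : ∃ x ∈ s0, x ∉ s1
      · by_cases hb : ∃ x ∈ s3, x ∉ s1
        · -- case α
          by_cases ha1 : ∃ x ∈ s0, x ∉ s1 ∧ x ∉ s2
          · obtain ⟨f0, hf0, f0n1, f0n2⟩ := ha1
            obtain ⟨f3, hf3, f3n1⟩ := hb
            obtain ⟨f4, hf4, f4f0⟩ := avoid1 s4 (by omega) f0
            obtain ⟨f5, hf5, f5f3⟩ := avoid1 s5 (by omega) f3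
            obtain ⟨f2, hf2, g1, g2, g3⟩ := avoid3 s2 (by omega) f3 f4 f5
            obtain ⟨f1, hf1, k1, k2, k3⟩ := avoid3 s1 (by omega) f2 f4 f5
            exact ⟨f0, f1, f2, f3, f4, f5, hf0, hf1, hf2, hf3, hf4, hf5,
              (nm hf1 f0n1).symm, (nm hf2 f0n2).symm, f4f0.symm, k1, nm hf1 f3n1,
              k2, k3, g1, g2, g3, f5f3.symm⟩
          · by_cases ha2 : ∃ x ∈ s3, x ∉ s1 ∧ x ∉ s2
            · obtain ⟨f3, hf3, f3n1, f3n2⟩ := ha2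
              obtain ⟨f0, hf0, f0n1⟩ := ha
              obtain ⟨f4, hf4, f4f0⟩ := avoid1 s4 (by omega) f0
              obtain ⟨f5, hf5, f5f3⟩ := avoid1 s5 (by omega) f3
              obtain ⟨f2, hf2, g1, g2, g3⟩ := avoid3 s2 (by omega) f0 f4 f5
              obtain ⟨f1, hf1, k1, k2, k3⟩ := avoid3 s1 (by omega) f2 f4 f5
              exact ⟨f0, f1, f2, f3, f4, f5, hf0, hf1, hf2, hf3, hf4, hf5,
                (nm hf1 f0n1).symm, g1.symm, f4f0.symm, k1, nm hf1 f3n1,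
                k2, k3, nm hf2 f3n2, g2, g3, f5f3.symm⟩
            · by_cases ha3 : ∃ x ∈ s4, x ∉ s2
              · obtain ⟨f4, hf4, f4n2⟩ := ha3
                obtain ⟨f0, hf0, f0n1⟩ := ha
                obtain ⟨f3, hf3, f3n1⟩ := hb
                have f04 : f0 ≠ f4 := by
                  intro h
                  exact ha1 ⟨f0, hf0, f0n1, by rw [h]; exact f4n2⟩
                obtain ⟨f5, hf5, f5f3⟩ := avoid1 s5 (by omega) f3
                obtain ⟨f2, hf2, g1, g2, g3⟩ := avoid3 s2 (by omega) f0 f3 f5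
                obtain ⟨f1, hf1, k1, k2, k3⟩ := avoid3 s1 (by omega) f2 f4 f5
                exact ⟨f0, f1, f2, f3, f4, f5, hf0, hf1, hf2, hf3, hf4, hf5,
                  (nm hf1 f0n1).symm, g1.symm, f04, k1, nm hf1 f3n1,
                  k2, k3, g2, nm hf2 f4n2, g3, f5f3.symm⟩
              · by_cases ha4 : ∃ x ∈ s5, x ∉ s2
                · obtain ⟨f5, hf5, f5n2⟩ := ha4
                  obtain ⟨f0, hf0, f0n1⟩ := ha
                  obtain ⟨f3, hf3, f3n1⟩ := hb
                  have f35 : f3 ≠ f5 := by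
                    intro h
                    exact ha2 ⟨f3, hf3, f3n1, by rw [h]; exact f5n2⟩
                  obtain ⟨f4, hf4, f4f0⟩ := avoid1 s4 (by omega) f0
                  obtain ⟨f2, hf2, g1, g2, g3⟩ := avoid3 s2 (by omega) f0 f3 f4
                  obtain ⟨f1, hf1, k1, k2, k3⟩ := avoid3 s1 (by omega) f2 f4 f5
                  exact ⟨f0, f1, f2, f3, f4, f5, hf0, hf1, hf2, hf3, hf4, hf5,
                    (nm hf1 f0n1).symm, g1.symm, f4f0.symm, k1, nm hf1 f3n1,
                    k2, k3, g2, g3, nm hf2 f5n2, f35⟩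
                · -- α5
                  push_neg at ha3 ha4
                  have hsub45 : s4 ∪ s5 ⊆ s2 := by
                    intro x hx
                    rcases Finset.mem_union.1 hx with h | h
                    exacts [ha3 x h, ha4 x h]
                  have hdisj45 : Disjoint s4 s5 :=
                    Finset.disjoint_left.2 fun a q1 q2 => (djl e45 q1) q2
                  have hcu : (s4 ∪ s5).card = 4 := by
                    rw [Finset.card_union_of_disjoint hdisj45]; omega
                  have hs2 : s4 ∪ s5 = s2 :=
                    Finset.eq_of_subset_of_card_le hsub45 (by omega)
                  have hx : ∃ x ∈ s4 ∪ s5, x ∉ s1 := by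
                    by_contra hxx
                    push_neg at hxx
                    obtain ⟨f0, hf0, f0n1⟩ := ha
                    push_neg at ha1
                    have hf02 : f0 ∈ s2 := ha1 f0 hf0 f0n1
                    have hf0u : f0 ∈ s4 ∪ s5 := hs2 ▸ hf02
                    exact f0n1 (hxx f0 hf0u)
                  have hf0' : ∃ x ∈ s0, x ∉ s2 := by
                    by_contra hcn
                    push_neg at hcn
                    have hsub04 : s0 ⊆ s4 := by
                      intro x hx0
                      have hx2 := hcn x hx0
                      rw [← hs2] at hx2
                      rcases Finset.mem_union.1 hx2 with h | h
                      · exact h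
                      · exact absurd h (hB2 x hx0)
                    have := Finset.card_le_card hsub04
                    omega
                  have hf3' : ∃ x ∈ s3, x ∉ s2 := by
                    by_contra hcn
                    push_neg at hcn
                    have hsub35 : s3 ⊆ s5 := by
                      intro x hx3
                      have hx2 := hcn x hx3
                      rw [← hs2] at hx2
                      rcases Finset.mem_union.1 hx2 with h | h
                      · exact absurd h (djl e34 hx3)
                      · exact h
                    have := Finset.card_le_card hsub35
                    omega
                  obtain ⟨f0, hf0, f0n2⟩ := hf0'
                  obtain ⟨f3, hf3, f3n2⟩ := hf3'
                  obtain ⟨x, hxu, xn1⟩ := hx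
                  rcases Finset.mem_union.1 hxu with hx4 | hx5
                  · obtain ⟨f5, hf5⟩ := getmem s5 (by omega)
                    have f04 : f0 ≠ x := (nm (ha3 x hx4) f0n2).symm
                    have f35 : f3 ≠ f5 := (nm (ha4 f5 hf5) f3n2).symm
                    obtain ⟨f1, hf1, k1, k2, k3⟩ := avoid3 s1 (by omega) f0 f3 f5
                    obtain ⟨f2, hf2, g1, g2, g3⟩ := avoid3 s2 (by omega) x f5 f1
                    exact ⟨f0, f1, f2, f3, x, f5, hf0, hf1, hf2, hf3, hx4, hf5,
                      k1.symm, (nm hf2 f0n2).symm, f04, g3.symm, k2, nm hf1 xn1,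
                      k3, nm hf2 f3n2, g1, g2, f35⟩
                  · obtain ⟨f4, hf4⟩ := getmem s4 (by omega)
                    have f04 : f0 ≠ f4 := (nm (ha3 f4 hf4) f0n2).symm
                    have f35 : f3 ≠ x := (nm (ha4 x hx5) f3n2).symm
                    obtain ⟨f1, hf1, k1, k2, k3⟩ := avoid3 s1 (by omega) f0 f3 f4
                    obtain ⟨f2, hf2, g1, g2, g3⟩ := avoid3 s2 (by omega) f4 x f1
                    exact ⟨f0, f1, f2, f3, f4, x, hf0, hf1, hf2, hf3, hf4, hx5,
                      k1.symm, (nm hf2 f0n2).symm, f04, g3.symm, k2, k3,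
                      nm hf1 xn1, nm hf2 f3n2, g1, g2, f35⟩
        · -- case β : s3 ⊆ s1
          push_neg at hb
          have hf4' : ∃ x ∈ s4, x ∉ s1 := by
            by_contra hcn
            push_neg at hcn
            have hsub : s3 ∪ s4 ⊆ s1 := by
              intro x hx
              rcases Finset.mem_union.1 hx with h | h
              exacts [hb x h, hcn x h]
            have hdisj : Disjoint s3 s4 :=
              Finset.disjoint_left.2 fun a q1 q2 => (djl e34 q1) q2
            have hcard := Finset.card_le_card hsub
            rw [Finset.card_union_of_disjoint hdisj] at hcard
            omega
          have hcap : (s0 ∩ s1).card ≤ 1 := by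
            have hsub : s3 ∪ (s0 ∩ s1) ⊆ s1 := by
              intro x hx
              rcases Finset.mem_union.1 hx with h | h
              exacts [hb x h, (Finset.mem_inter.1 h).2]
            have hdisj : Disjoint s3 (s0 ∩ s1) :=
              Finset.disjoint_left.2 fun a q1 q2 => (hB1 a (Finset.mem_inter.1 q2).1) q1
            have hcard := Finset.card_le_card hsub
            rw [Finset.card_union_of_disjoint hdisj] at hcard
            omega
          have hgen : ∀ w : ℕ, ∃ x ∈ s0, x ∉ s1 ∧ x ≠ w := by
            intro w
            by_contra hcn
            push_neg at hcn
            have hsub : s0 ⊆ insert w (s0 ∩ s1) := by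
              intro x hx
              by_cases hx1 : x ∈ s1
              · exact Finset.mem_insert.2 (Or.inr (Finset.mem_inter.2 ⟨hx, hx1⟩))
              · exact Finset.mem_insert.2 (Or.inl (hcn x hx hx1))
            have hc1 := Finset.card_le_card hsub
            have hc2 := Finset.card_insert_le w (s0 ∩ s1)
            omega
          obtain ⟨f4, hf4, f4n1⟩ := hf4'
          by_cases hb1 : ∃ x ∈ s3, x ∉ s2
          · obtain ⟨f3, hf3, f3n2⟩ := hb1
            obtain ⟨f0, hf0, f0n1, f04⟩ := hgen f4
            obtain ⟨f5, hf5, f5f3⟩ := avoid1 s5 (by omega) f3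
            obtain ⟨f2, hf2, g1, g2, g3⟩ := avoid3 s2 (by omega) f0 f4 f5
            obtain ⟨f1, hf1, k1, k2, k3⟩ := avoid3 s1 (by omega) f2 f3 f5
            exact ⟨f0, f1, f2, f3, f4, f5, hf0, hf1, hf2, hf3, hf4, hf5,
              (nm hf1 f0n1).symm, g1.symm, f04, k1, k2, nm hf1 f4n1, k3,
              nm hf2 f3n2, g2, g3, f5f3.symm⟩
          · by_cases hb2 : ∃ x ∈ s4, x ∉ s1 ∧ x ∉ s2
            · obtain ⟨f4', hf4'', f4'n1, f4'n2⟩ := hb2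
              obtain ⟨f0, hf0, f0n1, f04⟩ := hgen f4'
              obtain ⟨f3, hf3⟩ := getmem s3 (by omega)
              obtain ⟨f5, hf5, f5f3⟩ := avoid1 s5 (by omega) f3
              obtain ⟨f2, hf2, g1, g2, g3⟩ := avoid3 s2 (by omega) f0 f3 f5
              obtain ⟨f1, hf1, k1, k2, k3⟩ := avoid3 s1 (by omega) f2 f3 f5
              exact ⟨f0, f1, f2, f3, f4', f5, hf0, hf1, hf2, hf3, hf4'', hf5,
                (nm hf1 f0n1).symm, g1.symm, f04, k1, k2, nm hf1 f4'n1, k3,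
                g2, nm hf2 f4'n2, g3, f5f3.symm⟩
            · by_cases hb3 : ∃ x ∈ s0, x ∉ s1 ∧ x ∉ s2
              · obtain ⟨f0, hf0, f0n1, f0n2⟩ := hb3
                have f04 : f0 ≠ f4 := by
                  intro h
                  exact hb2 ⟨f4, hf4, f4n1, by rw [← h]; exact f0n2⟩
                obtain ⟨f3, hf3⟩ := getmem s3 (by omega)
                obtain ⟨f5, hf5, f5f3⟩ := avoid1 s5 (by omega) f3
                obtain ⟨f2, hf2, g1, g2, g3⟩ := avoid3 s2 (by omega) f3 f4 f5
                obtain ⟨f1, hf1, k1, k2, k3⟩ := avoid3 s1 (by omega) f2 f3 f5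
                exact ⟨f0, f1, f2, f3, f4, f5, hf0, hf1, hf2, hf3, hf4, hf5,
                  (nm hf1 f0n1).symm, (nm hf2 f0n2).symm, f04, k1, k2,
                  nm hf1 f4n1, k3, g1, g2, g3, f5f3.symm⟩
              · exfalso
                push_neg at hb1 hb3
                have hsub : s3 ∪ (s0 \ s1) ⊆ s2 := by
                  intro x hx
                  rcases Finset.mem_union.1 hx with h | h
                  · exact hb1 x h
                  · exact hb3 x (Finset.mem_sdiff.1 h).1 (Finset.mem_sdiff.1 h).2
                have hdisj : Disjoint s3 (s0 \ s1) :=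
                  Finset.disjoint_left.2 fun a q1 q2 => (hB1 a (Finset.mem_sdiff.1 q2).1) q1
                have hcard := Finset.card_le_card hsub
                rw [Finset.card_union_of_disjoint hdisj] at hcard
                have hsd := Finset.card_inter_add_card_sdiff s0 s1
                omega
      · -- case γ : s0 ⊆ s1
        push_neg at ha
        have hf5' : ∃ x ∈ s5, x ∉ s1 := by
          by_contra hcn
          push_neg at hcn
          have hsub : s0 ∪ s5 ⊆ s1 := by
            intro x hx
            rcases Finset.mem_union.1 hx with h | h
            exacts [ha x h, hcn x h]
          have hdisj : Disjoint s0 s5 :=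
            Finset.disjoint_left.2 fun a q1 q2 => (hB2 a q1) q2
          have hcard := Finset.card_le_card hsub
          rw [Finset.card_union_of_disjoint hdisj] at hcard
          omega
        have hcap : (s3 ∩ s1).card ≤ 1 := by
          have hsub : s0 ∪ (s3 ∩ s1) ⊆ s1 := by
            intro x hx
            rcases Finset.mem_union.1 hx with h | h
            exacts [ha x h, (Finset.mem_inter.1 h).2]
          have hdisj : Disjoint s0 (s3 ∩ s1) :=
            Finset.disjoint_left.2 fun a q1 q2 => (hB1 a q1) (Finset.mem_inter.1 q2).1
          have hcard := Finset.card_le_card hsub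
          rw [Finset.card_union_of_disjoint hdisj] at hcard
          omega
        have hgen : ∀ w : ℕ, ∃ x ∈ s3, x ∉ s1 ∧ x ≠ w := by
          intro w
          by_contra hcn
          push_neg at hcn
          have hsub : s3 ⊆ insert w (s3 ∩ s1) := by
            intro x hx
            by_cases hx1 : x ∈ s1
            · exact Finset.mem_insert.2 (Or.inr (Finset.mem_inter.2 ⟨hx, hx1⟩))
            · exact Finset.mem_insert.2 (Or.inl (hcn x hx hx1))
          have hc1 := Finset.card_le_card hsub
          have hc2 := Finset.card_insert_le w (s3 ∩ s1)
          omega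
        obtain ⟨f5, hf5, f5n1⟩ := hf5'
        by_cases hg1 : ∃ x ∈ s0, x ∉ s2
        · obtain ⟨f0, hf0, f0n2⟩ := hg1
          obtain ⟨f3, hf3, f3n1, f35⟩ := hgen f5
          obtain ⟨f4, hf4, f4f0⟩ := avoid1 s4 (by omega) f0
          obtain ⟨f2, hf2, g1, g2, g3⟩ := avoid3 s2 (by omega) f3 f4 f5
          obtain ⟨f1, hf1, k1, k2, k3⟩ := avoid3 s1 (by omega) f0 f2 f4
          exact ⟨f0, f1, f2, f3, f4, f5, hf0, hf1, hf2, hf3, hf4, hf5,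
            k1.symm, (nm hf2 f0n2).symm, f4f0.symm, k2, nm hf1 f3n1, k3,
            nm hf1 f5n1, g1, g2, g3, f35⟩
        · by_cases hg2 : ∃ x ∈ s5, x ∉ s1 ∧ x ∉ s2
          · obtain ⟨f5', hf5'', f5'n1, f5'n2⟩ := hg2
            obtain ⟨f3, hf3, f3n1, f35⟩ := hgen f5'
            obtain ⟨f0, hf0⟩ := getmem s0 (by omega)
            obtain ⟨f4, hf4, f4f0⟩ := avoid1 s4 (by omega) f0
            obtain ⟨f2, hf2, g1, g2, g3⟩ := avoid3 s2 (by omega) f0 f3 f4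
            obtain ⟨f1, hf1, k1, k2, k3⟩ := avoid3 s1 (by omega) f0 f2 f4
            exact ⟨f0, f1, f2, f3, f4, f5', hf0, hf1, hf2, hf3, hf4, hf5'',
              k1.symm, g1.symm, f4f0.symm, k2, nm hf1 f3n1, k3,
              nm hf1 f5'n1, g2, g3, nm hf2 f5'n2, f35⟩
          · by_cases hg3 : ∃ x ∈ s3, x ∉ s1 ∧ x ∉ s2
            · obtain ⟨f3, hf3, f3n1, f3n2⟩ := hg3
              have f35 : f3 ≠ f5 := by
                intro h
                exact hg2 ⟨f5, hf5, f5n1, by rw [← h]; exact f3n2⟩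
              obtain ⟨f0, hf0⟩ := getmem s0 (by omega)
              obtain ⟨f4, hf4, f4f0⟩ := avoid1 s4 (by omega) f0
              obtain ⟨f2, hf2, g1, g2, g3⟩ := avoid3 s2 (by omega) f0 f4 f5
              obtain ⟨f1, hf1, k1, k2, k3⟩ := avoid3 s1 (by omega) f0 f2 f4
              exact ⟨f0, f1, f2, f3, f4, f5, hf0, hf1, hf2, hf3, hf4, hf5,
                k1.symm, g1.symm, f4f0.symm, k2, nm hf1 f3n1, k3,
                nm hf1 f5n1, nm hf2 f3n2, g2, g3, f35⟩
            · exfalso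
              push_neg at hg1 hg3
              have hsub : s0 ∪ (s3 \ s1) ⊆ s2 := by
                intro x hx
                rcases Finset.mem_union.1 hx with h | h
                · exact hg1 x h
                · exact hg3 x (Finset.mem_sdiff.1 h).1 (Finset.mem_sdiff.1 h).2
              have hdisj : Disjoint s0 (s3 \ s1) :=
                Finset.disjoint_left.2 fun a q1 q2 => (hB1 a q1) (Finset.mem_sdiff.1 q2).1
              have hcard := Finset.card_le_card hsub
              rw [Finset.card_union_of_disjoint hdisj] at hcard
              have hsd := Finset.card_inter_add_card_sdiff s3 s1
              omega

/-- Lemma 2.3 (2): the square of `J2` (edges `v1v2, v2v3, v3v4, v1v5, v2v5, v3v6, v4v6`)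
with adjacencies `v1v2, v1v3, v1v5, v2v3, v2v4, v2v5, v2v6, v3v4, v3v5, v3v6, v4v6`
is colorable from lists of sizes `3, 4, 4, 3, 2, 2`. Vertex `i : Fin 6` stands for `v(i+1)`. -/
theorem J2_square_list_colorable_two (L : Fin 6 → Finset ℕ)
    (h1 : (L 0).card = 3) (h2 : (L 1).card = 4) (h3 : (L 2).card = 4)
    (h4 : (L 3).card = 3) (h5 : (L 4).card = 2) (h6 : (L 5).card = 2) :
    ∃ f : Fin 6 → ℕ, (∀ v, f v ∈ L v) ∧
      f 0 ≠ f 1 ∧ f 0 ≠ f 2 ∧ f 0 ≠ f 4 ∧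
      f 1 ≠ f 2 ∧ f 1 ≠ f 3 ∧ f 1 ≠ f 4 ∧ f 1 ≠ f 5 ∧
      f 2 ≠ f 3 ∧ f 2 ≠ f 4 ∧ f 2 ≠ f 5 ∧ f 3 ≠ f 5 := by
  have key : colOK (L 0) (L 1) (L 2) (L 3) (L 4) (L 5) := by
    by_cases hc : ∃ c, c ∈ L 4 ∧ c ∈ L 5
    · obtain ⟨c, hc4, hc5⟩ := hc
      exact lemA h1 h2 h3 h4 hc4 hc5
    · push_neg at hc
      have e45 : L 4 ∩ L 5 = ∅ := by
        apply Finset.eq_empty_iff_forall_notMem.2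
        intro x hx
        exact (hc x (Finset.mem_inter.1 hx).1) (Finset.mem_inter.1 hx).2
      by_cases h05 : ∃ d ∈ L 0, d ∈ L 5
      · by_cases h34 : ∃ c ∈ L 3, c ∈ L 4
        · obtain ⟨d, hd0, hd5⟩ := h05
          obtain ⟨c, hc3, hc4'⟩ := h34
          have hcd : c ≠ d := nm hc4' (djr e45 hd5)
          obtain ⟨f2, hf2, g1, g2⟩ := avoid2 (L 2) (by omega) c d
          obtain ⟨f1, hf1, k1, k2, k3⟩ := avoid3 (L 1) (by omega) c d f2
          exact ⟨d, f1, f2, c, c, d, hd0, hf1, hf2, hc3, hc4', hd5,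
            k2.symm, g2.symm, hcd.symm, k3, k1, k1, k2, g1, g1, g2, hcd⟩
        · push_neg at h34
          have e34 : L 3 ∩ L 4 = ∅ := by
            apply Finset.eq_empty_iff_forall_notMem.2
            intro x hx
            exact (h34 x (Finset.mem_inter.1 hx).1) (Finset.mem_inter.1 hx).2
          exact lemB h1 h2 h3 h4 h5 h6 e45 e34
      · push_neg at h05
        have e05 : L 0 ∩ L 5 = ∅ := by
          apply Finset.eq_empty_iff_forall_notMem.2
          intro x hx
          exact (h05 x (Finset.mem_inter.1 hx).1) (Finset.mem_inter.1 hx).2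
        have e54 : L 5 ∩ L 4 = ∅ := by rw [Finset.inter_comm]; exact e45
        obtain ⟨g0, g1, g2, g3, g4, g5, m0, m1, m2, m3, m4, m5,
          q01, q02, q04, q12, q13, q14, q15, q23, q24, q25, q35⟩ :=
          lemB (s0 := L 3) (s1 := L 2) (s2 := L 1) (s3 := L 0) (s4 := L 5) (s5 := L 4)
            h4 h3 h2 h1 h6 h5 e54 e05
        exact ⟨g3, g2, g1, g0, g5, g4, m3, m2, m1, m0, m5, m4,
          q23.symm, q13.symm, q35, q12.symm, q02.symm, q25, q24,
          q01.symm, q15, q14, q04⟩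
  obtain ⟨f0, f1, f2, f3, f4, f5, m0, m1, m2, m3, m4, m5,
    e01, e02, e04, e12, e13, e14, e15, e23, e24, e25, e35⟩ := key
  refine ⟨![f0, f1, f2, f3, f4, f5], ?_, e01, e02, e04, e12, e13, e14, e15, e23, e24, e25, e35⟩
  intro v
  fin_cases v
  · exact m0
  · exact m1
  · exact m2
  · exact m3
  · exact m4
  · exact m5
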